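/- Let A be a po-group with RDP for which there exist non-comparable elements a,b ∈ A⁺\{0} with a+b = b+a such that no d ∈ A with 0 < d ≤ a, d ≤ b satisfies −a+d+a = −b+d+b. Let G be a directed po-group. If the lexicographic product A ×⃗ G satisfies RDP, then G satisfies RDP and, for every equation u₁+u₂ = v₁+v₂ of elements of G, there exist d₁,d₂ ∈ G with d₁ ≤ u₁, d₁ ≤ v₂, d₂ ≤ u₂, d₂ ≤ v₁, d₁+d₂ = d₂+d₁, and −u₁+v₁ = −d₁+d₂ (i.e., G has wRDP). -/

import Mathlib

/-- A po-group satisfies RDP if every equation `a₁ + a₂ = b₁ + b₂` of positive elements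
admits a Riesz decomposition by four positive elements. -/
def RDP (G : Type*) [AddGroup G] [PartialOrder G] : Prop :=
  ∀ a₁ a₂ b₁ b₂ : G, 0 ≤ a₁ → 0 ≤ a₂ → 0 ≤ b₁ → 0 ≤ b₂ → a₁ + a₂ = b₁ + b₂ →
    ∃ c₁₁ c₁₂ c₂₁ c₂₂ : G, 0 ≤ c₁₁ ∧ 0 ≤ c₁₂ ∧ 0 ≤ c₂₁ ∧ 0 ≤ c₂₂ ∧
      a₁ = c₁₁ + c₁₂ ∧ a₂ = c₂₁ + c₂₂ ∧ b₁ = c₁₁ + c₂₁ ∧ b₂ = c₁₂ + c₂₂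

/-- A po-group has wRDP if for each equation `u₁ + u₂ = v₁ + v₂` there are `d₁, d₂` with
`d₁ ≤ u₁, v₂`, `d₂ ≤ u₂, v₁`, `d₁ + d₂ = d₂ + d₁` and `-u₁ + v₁ = -d₁ + d₂`. -/
def wRDP (G : Type*) [AddGroup G] [PartialOrder G] : Prop :=
  ∀ u₁ u₂ v₁ v₂ : G, u₁ + u₂ = v₁ + v₂ →
    ∃ d₁ d₂ : G, d₁ ≤ u₁ ∧ d₁ ≤ v₂ ∧ d₂ ≤ u₂ ∧ d₂ ≤ v₁ ∧
      d₁ + d₂ = d₂ + d₁ ∧ -u₁ + v₁ = -d₁ + d₂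

/-!
Decompose `(a, u₁) + (b, u₂) = (b, v₁) + (a, v₂)` in `A ×ₗ G` by RDP into `cᵢⱼ = (xᵢⱼ, gᵢⱼ)`.
In `A` the corner `x₁₁` is a common lower bound of `a` and `b` with
`-a + x₁₁ + a = x₂₂ = -b + x₁₁ + b`, so the hypothesis on `a, b` forces `x₁₁ = x₂₂ = 0`.
The lexicographic order then makes `g₁₁` and `g₂₂` positive, and `d₁ = g₁₂`, `d₂ = g₂₁`
witness wRDP. RDP of `G` is the same argument with first coordinates `0`, which positivity
propagates to all four pieces.
-/

section LexCone

variable {A G : Type*}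

theorem Prod.Lex.toLex_eq_add_iff [Add A] [Add G] {a : A} {g : G} {c d : A ×ₗ G} :
    toLex (a, g) = c + d ↔ a = (ofLex c).1 + (ofLex d).1 ∧ g = (ofLex c).2 + (ofLex d).2 :=
  Prod.ext_iff

variable [Zero A] [Zero G]

theorem Prod.Lex.toLex_nonneg_of_pos [LT A] [LE G] {a : A} (ha : 0 < a) (g : G) :
    0 ≤ toLex (a, g) :=
  Prod.Lex.toLex_le_toLex.2 (Or.inl ha)

theorem Prod.Lex.toLex_zero_nonneg [LT A] [LE G] {g : G} (hg : 0 ≤ g) :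
    0 ≤ toLex ((0 : A), g) :=
  Prod.Lex.toLex_le_toLex.2 (Or.inr ⟨rfl, hg⟩)

variable [Preorder A] [LE G]

theorem Prod.Lex.fst_nonneg_of_nonneg {c : A ×ₗ G} (hc : 0 ≤ c) : 0 ≤ (ofLex c).1 :=
  Prod.Lex.monotone_fst 0 c hc

theorem Prod.Lex.snd_nonneg_of_nonneg_of_fst_eq_zero {c : A ×ₗ G} (hc : 0 ≤ c)
    (h : (ofLex c).1 = 0) : 0 ≤ (ofLex c).2 := by
  rcases Prod.Lex.le_iff.1 hc with hlt | ⟨-, hle⟩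
  · exact absurd (h ▸ hlt) (lt_irrefl 0)
  · exact hle

end LexCone

section

variable {A G : Type*} [AddGroup A] [PartialOrder A] [AddGroup G] [PartialOrder G]

theorem corner_eq_zero_of_cross_decomposition [CovariantClass A A (· + ·) (· ≤ ·)]
    {a b x₁₁ x₁₂ x₂₁ x₂₂ : A}
    (hno : ¬ ∃ d : A, 0 < d ∧ d ≤ a ∧ d ≤ b ∧ -a + d + a = -b + d + b)
    (h₁₁ : 0 ≤ x₁₁) (h₁₂ : 0 ≤ x₁₂) (h₂₁ : 0 ≤ x₂₁)
    (ha₁ : a = x₁₁ + x₁₂) (ha₂ : a = x₁₂ + x₂₂) (hb₁ : b = x₂₁ + x₂₂) (hb₂ : b = x₁₁ + x₂₁) :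
    x₁₁ = 0 ∧ x₂₂ = 0 := by
  have conj_a : -a + x₁₁ + a = x₂₂ := calc
    -a + x₁₁ + a = -(x₁₁ + x₁₂) + x₁₁ + (x₁₂ + x₂₂) := by rw [← ha₁, ← ha₂]
    _ = x₂₂ := by simp only [neg_add_rev, add_assoc, neg_add_cancel_left]
  have conj_b : -b + x₁₁ + b = x₂₂ := calc
    -b + x₁₁ + b = -(x₁₁ + x₂₁) + x₁₁ + (x₂₁ + x₂₂) := by rw [← hb₁, ← hb₂]
    _ = x₂₂ := by simp only [neg_add_rev, add_assoc, neg_add_cancel_left]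
  have hx₁₁ : x₁₁ = 0 := by
    by_contra hne
    refine hno ⟨x₁₁, h₁₁.lt_of_ne' hne, ?_, ?_, conj_a.trans conj_b.symm⟩
    · rw [ha₁]; exact le_add_of_nonneg_right h₁₂
    · rw [hb₂]; exact le_add_of_nonneg_right h₂₁
  refine ⟨hx₁₁, ?_⟩
  rw [← conj_a, hx₁₁, add_zero, neg_add_cancel]

theorem exists_wRDP_witness_of_decomposition [CovariantClass G G (· + ·) (· ≤ ·)]
    [CovariantClass G G (Function.swap (· + ·)) (· ≤ ·)] {u₁ u₂ v₁ v₂ g₁₁ g₁₂ g₂₁ g₂₂ : G}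
    (h : u₁ + u₂ = v₁ + v₂) (h₁₁ : 0 ≤ g₁₁) (h₂₂ : 0 ≤ g₂₂)
    (hu₁ : u₁ = g₁₁ + g₁₂) (hu₂ : u₂ = g₂₁ + g₂₂) (hv₁ : v₁ = g₁₁ + g₂₁) (hv₂ : v₂ = g₁₂ + g₂₂) :
    ∃ d₁ d₂ : G, d₁ ≤ u₁ ∧ d₁ ≤ v₂ ∧ d₂ ≤ u₂ ∧ d₂ ≤ v₁ ∧
      d₁ + d₂ = d₂ + d₁ ∧ -u₁ + v₁ = -d₁ + d₂ := by
  subst hu₁ hu₂ hv₁ hv₂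
  refine ⟨g₁₂, g₂₁, le_add_of_nonneg_left h₁₁, le_add_of_nonneg_right h₂₂,
    le_add_of_nonneg_right h₂₂, le_add_of_nonneg_left h₁₁, ?_, ?_⟩
  · have h' := add_left_cancel (a := g₁₁) (by simpa only [add_assoc] using h)
    rw [← add_assoc, ← add_assoc] at h'
    exact add_right_cancel h'
  · simp only [neg_add_rev, add_assoc, neg_add_cancel_left]

theorem RDP.of_lex [CovariantClass A A (· + ·) (· ≤ ·)]
    [CovariantClass A A (Function.swap (· + ·)) (· ≤ ·)] (h : RDP (A ×ₗ G)) : RDP G := by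
  intro a₁ a₂ b₁ b₂ ha₁ ha₂ hb₁ hb₂ heq
  obtain ⟨c₁₁, c₁₂, c₂₁, c₂₂, h₁₁, h₁₂, h₂₁, h₂₂, e₁, e₂, e₃, e₄⟩ :=
    h (toLex (0, a₁)) (toLex (0, a₂)) (toLex (0, b₁)) (toLex (0, b₂))
      (Prod.Lex.toLex_zero_nonneg ha₁) (Prod.Lex.toLex_zero_nonneg ha₂)
      (Prod.Lex.toLex_zero_nonneg hb₁) (Prod.Lex.toLex_zero_nonneg hb₂)
      (Prod.ext rfl heq)
  rw [Prod.Lex.toLex_eq_add_iff] at e₁ e₂ e₃ e₄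
  have fst_eq_zero {c d : A ×ₗ G} (hc : 0 ≤ c) (hd : 0 ≤ d) (e : 0 = (ofLex c).1 + (ofLex d).1) :
      (ofLex c).1 = 0 ∧ (ofLex d).1 = 0 :=
    (add_eq_zero_iff_of_nonneg (Prod.Lex.fst_nonneg_of_nonneg hc)
      (Prod.Lex.fst_nonneg_of_nonneg hd)).1 e.symm
  obtain ⟨z₁₁, z₁₂⟩ := fst_eq_zero h₁₁ h₁₂ e₁.1
  obtain ⟨z₂₁, z₂₂⟩ := fst_eq_zero h₂₁ h₂₂ e₂.1
  exact ⟨_, _, _, _, Prod.Lex.snd_nonneg_of_nonneg_of_fst_eq_zero h₁₁ z₁₁,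
    Prod.Lex.snd_nonneg_of_nonneg_of_fst_eq_zero h₁₂ z₁₂,
    Prod.Lex.snd_nonneg_of_nonneg_of_fst_eq_zero h₂₁ z₂₁,
    Prod.Lex.snd_nonneg_of_nonneg_of_fst_eq_zero h₂₂ z₂₂, e₁.2, e₂.2, e₃.2, e₄.2⟩

theorem wRDP_of_lex_rdp [CovariantClass A A (· + ·) (· ≤ ·)]
    [CovariantClass G G (· + ·) (· ≤ ·)] [CovariantClass G G (Function.swap (· + ·)) (· ≤ ·)]
    {a b : A} (ha : 0 < a) (hb : 0 < b) (hab : a + b = b + a)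
    (hno : ¬ ∃ d : A, 0 < d ∧ d ≤ a ∧ d ≤ b ∧ -a + d + a = -b + d + b)
    (h : RDP (A ×ₗ G)) : wRDP G := by
  intro u₁ u₂ v₁ v₂ heq
  obtain ⟨c₁₁, c₁₂, c₂₁, c₂₂, h₁₁, h₁₂, h₂₁, h₂₂, e₁, e₂, e₃, e₄⟩ :=
    h (toLex (a, u₁)) (toLex (b, u₂)) (toLex (b, v₁)) (toLex (a, v₂))
      (Prod.Lex.toLex_nonneg_of_pos ha u₁) (Prod.Lex.toLex_nonneg_of_pos hb u₂)
      (Prod.Lex.toLex_nonneg_of_pos hb v₁) (Prod.Lex.toLex_nonneg_of_pos ha v₂)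
      (Prod.ext hab heq)
  rw [Prod.Lex.toLex_eq_add_iff] at e₁ e₂ e₃ e₄
  obtain ⟨z₁₁, z₂₂⟩ := corner_eq_zero_of_cross_decomposition hno
    (Prod.Lex.fst_nonneg_of_nonneg h₁₁) (Prod.Lex.fst_nonneg_of_nonneg h₁₂)
    (Prod.Lex.fst_nonneg_of_nonneg h₂₁) e₁.1 e₄.1 e₂.1 e₃.1
  exact exists_wRDP_witness_of_decomposition heq
    (Prod.Lex.snd_nonneg_of_nonneg_of_fst_eq_zero h₁₁ z₁₁)
    (Prod.Lex.snd_nonneg_of_nonneg_of_fst_eq_zero h₂₂ z₂₂) e₁.2 e₂.2 e₃.2 e₄.2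

end

theorem rdp_and_wRDP_of_lex_rdp_general {A G : Type*}
    [AddGroup A] [PartialOrder A]
    [CovariantClass A A (· + ·) (· ≤ ·)]
    [CovariantClass A A (Function.swap (· + ·)) (· ≤ ·)]
    [AddGroup G] [PartialOrder G]
    [CovariantClass G G (· + ·) (· ≤ ·)]
    [CovariantClass G G (Function.swap (· + ·)) (· ≤ ·)]
    (hab : ∃ a b : A, 0 ≤ a ∧ a ≠ 0 ∧ 0 ≤ b ∧ b ≠ 0 ∧ ¬ a ≤ b ∧ ¬ b ≤ a ∧
      a + b = b + a ∧ ¬ ∃ d : A, 0 < d ∧ d ≤ a ∧ d ≤ b ∧ -a + d + a = -b + d + b)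
    (hlex : RDP (A ×ₗ G)) :
    RDP G ∧ wRDP G := by
  obtain ⟨a, b, ha, ha₀, hb, hb₀, -, -, hcomm, hno⟩ := hab
  exact ⟨hlex.of_lex, wRDP_of_lex_rdp (ha.lt_of_ne' ha₀) (hb.lt_of_ne' hb₀) hcomm hno hlex⟩

/-- Let `A` be a po-group with RDP having non-comparable commuting
`a, b ∈ A⁺ \ {0}` for which no `d` with `0 < d ≤ a, b` satisfies `-a + d + a = -b + d + b`,
and let `G` be a directed po-group. If `A ×ₗ G` satisfies RDP, then `G` satisfies RDP
and `G` has wRDP. -/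
theorem rdp_and_wRDP_of_lex_rdp {A G : Type*}
    [AddGroup A] [PartialOrder A]
    [CovariantClass A A (· + ·) (· ≤ ·)]
    [CovariantClass A A (Function.swap (· + ·)) (· ≤ ·)]
    [AddGroup G] [PartialOrder G]
    [CovariantClass G G (· + ·) (· ≤ ·)]
    [CovariantClass G G (Function.swap (· + ·)) (· ≤ ·)]
    (hA : RDP A)
    (hab : ∃ a b : A, 0 ≤ a ∧ a ≠ 0 ∧ 0 ≤ b ∧ b ≠ 0 ∧ ¬ a ≤ b ∧ ¬ b ≤ a ∧
      a + b = b + a ∧ ¬ ∃ d : A, 0 < d ∧ d ≤ a ∧ d ≤ b ∧ -a + d + a = -b + d + b)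
    (hdir : ∀ x y : G, ∃ z : G, x ≤ z ∧ y ≤ z)
    (hlex : RDP (A ×ₗ G)) :
    RDP G ∧ wRDP G :=
  rdp_and_wRDP_of_lex_rdp_general hab hlex
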